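/- arXiv:1903.09444 — 2 statements merged into one kernel-verified Lean document; each statement's English description precedes it below -/
import Mathlib

section
/- Let φ be a perfect 2-coloring of Ci_∞(D_n) with positive outer degrees b, c and b + c = 2n. Then φ is periodic with period 4n, and moreover φ(i - 2n + 1) = φ(i + 2n + 1) for every integer i. -/
/-!
When `b + c = 2n`, every vertex (black or white) has exactly `b` white neighbours, since each
vertex has `2n` neighbours. Moving from `i` to `i + 2` removes the neighbour `i - 2n + 1` and adds
the neighbour `i + 2n + 1`; as the white count stays `b`, these two vertices have the same colour.
Taking `i = j + 2n - 1` gives `φ j = φ (j + 4n)`.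
-/

/-- Neighborhood of `i` in the infinite circulant graph `Ci_∞(D_n)`,
`D_n = {±1, ±3, …, ±(2n-1)}`: the integers at odd distance less than `2n` from `i`. -/
noncomputable def nbrs (n : ℕ) (i : ℤ) : Finset ℤ :=
  (Finset.Icc (i - (2*(n:ℤ) - 1)) (i + (2*(n:ℤ) - 1))).filter (fun j => Odd (j - i))

/-- `φ` is a perfect 2-coloring of `Ci_∞(D_n)` with outer degrees `(b, c)`:
every vertex of color 0 (black) has exactly `b` neighbors of color 1 (white), and
every vertex of color 1 has exactly `c` neighbors of color 0. -/
def Perfect2 (n : ℕ) (φ : ℤ → Fin 2) (b c : ℕ) : Prop :=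
  (∀ i, φ i = 0 → ((nbrs n i).filter (fun j => φ j = 1)).card = b) ∧
  (∀ i, φ i = 1 → ((nbrs n i).filter (fun j => φ j = 0)).card = c)

open Finset

theorem Finset.iff_of_card_filter_insert_erase {α : Type*} [DecidableEq α] (p : α → Prop)
    [DecidablePred p] {s : Finset α} {u v : α} (hu : u ∈ s) (hv : v ∉ s)
    (h : #((insert v (s.erase u)).filter p) = #(s.filter p)) : (p u ↔ p v) := by
  rw [card_filter, card_filter, sum_insert fun hmem => hv (mem_of_mem_erase hmem),
    ← add_sum_erase s _ hu, add_right_cancel_iff] at h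
  split_ifs at h <;> simp_all

lemma nbrs_eq_image (n : ℕ) (i : ℤ) :
    nbrs n i = (Icc (-(n : ℤ)) (n - 1)).image fun m => i + 2 * m + 1 := by
  ext j
  simp only [nbrs, mem_filter, mem_Icc, mem_image, Int.odd_iff]
  constructor
  · rintro ⟨⟨h1, h2⟩, h3⟩
    exact ⟨(j - i - 1) / 2, ⟨by omega, by omega⟩, by omega⟩
  · rintro ⟨m, ⟨hm1, hm2⟩, rfl⟩
    omega

lemma card_nbrs (n : ℕ) (i : ℤ) : #(nbrs n i) = 2 * n := by
  rw [nbrs_eq_image, card_image_of_injective _ fun a b h => by omega, Int.card_Icc]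
  omega

lemma nbrs_add_two {n : ℕ} (hn : 0 < n) (i : ℤ) :
    nbrs n (i + 2) = insert (i + 2 * n + 1) ((nbrs n i).erase (i - 2 * n + 1)) := by
  ext j
  simp only [nbrs, mem_insert, mem_erase, mem_filter, mem_Icc, Int.odd_iff]
  omega

lemma left_mem_nbrs {n : ℕ} (hn : 0 < n) (i : ℤ) : i - 2 * n + 1 ∈ nbrs n i := by
  simp only [nbrs, mem_filter, mem_Icc, Int.odd_iff]
  omega

lemma right_notMem_nbrs (n : ℕ) (i : ℤ) : i + 2 * n + 1 ∉ nbrs n i := by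
  simp only [nbrs, mem_filter, mem_Icc, Int.odd_iff]
  omega

lemma Perfect2.card_white_nbrs {n b c : ℕ} {φ : ℤ → Fin 2} (hφ : Perfect2 n φ b c)
    (hbc : b + c = 2 * n) (i : ℤ) : #((nbrs n i).filter fun j => φ j = 1) = b := by
  rcases Fin.exists_fin_two.1 ⟨φ i, rfl⟩ with hi | hi
  · exact hφ.1 i hi
  · have hsplit := card_filter_add_card_filter_not (s := nbrs n i) (fun j => φ j = 0)
    have hwhite : (nbrs n i).filter (fun j => ¬φ j = 0) = (nbrs n i).filter fun j => φ j = 1 :=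
      filter_congr fun j _ => ⟨Fin.eq_one_of_ne_zero _, fun h => h ▸ one_ne_zero⟩
    rw [hwhite, card_nbrs, hφ.2 i hi] at hsplit
    omega

lemma Perfect2.color_eq_of_add_two {n b c : ℕ} {φ : ℤ → Fin 2} (hφ : Perfect2 n φ b c)
    (hn : 0 < n) (hbc : b + c = 2 * n) (i : ℤ) : φ (i - 2 * n + 1) = φ (i + 2 * n + 1) := by
  have hwhite := Finset.iff_of_card_filter_insert_erase (fun j => φ j = 1)
    (left_mem_nbrs hn i) (right_notMem_nbrs n i)
    (by rw [← nbrs_add_two hn, hφ.card_white_nbrs hbc, hφ.card_white_nbrs hbc])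
  exact (by decide : ∀ x y : Fin 2, (x = 1 ↔ y = 1) → x = y) _ _ hwhite

theorem sum_two_n_period_general (n b c : ℕ) (hn : 0 < n)
    (hbc : b + c = 2*n)
    (φ : ℤ → Fin 2) (hφ : Perfect2 n φ b c) :
    (∀ i : ℤ, φ (i + 4*(n:ℤ)) = φ i) ∧
    (∀ i : ℤ, φ (i - 2*(n:ℤ) + 1) = φ (i + 2*(n:ℤ) + 1)) := by
  refine ⟨fun i => ?_, hφ.color_eq_of_add_two hn hbc⟩
  have h := hφ.color_eq_of_add_two hn hbc (i + 2 * n - 1)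
  rwa [show i + 2 * n - 1 - 2 * n + 1 = i by ring,
    show i + 2 * (n : ℤ) - 1 + 2 * n + 1 = i + 4 * n by ring, eq_comm] at h

/-- If `b + c = 2n`, then `φ` is periodic with period `4n` and
`φ(i-2n+1) = φ(i+2n+1)` for every `i`. -/
theorem sum_two_n_period (n b c : ℕ) (hn : 0 < n) (hb : 0 < b) (hc : 0 < c)
    (hbc : b + c = 2*n)
    (φ : ℤ → Fin 2) (hφ : Perfect2 n φ b c) :
    (∀ i : ℤ, φ (i + 4*(n:ℤ)) = φ i) ∧
    (∀ i : ℤ, φ (i - 2*(n:ℤ) + 1) = φ (i + 2*(n:ℤ) + 1)) :=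
  sum_two_n_period_general n b c hn hbc φ hφ
end

section
/- Let φ be a periodic perfect k-coloring of Ci_∞(D_n) with period t (t even). Then either the sets of colors appearing on even vertices and on odd vertices are disjoint, or for each color c the number of even residues i in {0,...,t-1} with φ(i) = c equals the number of odd residues j in {0,...,t-1} with φ(j) = c. -/
/-- `φ` is a perfect `k`-coloring of `Ci_∞(D_n)` with parameter matrix `M`. -/
def PerfectK (n k : ℕ) (φ : ℤ → Fin k) (M : Fin k → Fin k → ℕ) : Prop :=
  ∀ i j, ((nbrs n i).filter (fun x => φ x = j)).card = M (φ i) j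

/-!
Let `e c` and `o c` count the even and the odd residues of colour `c` in one period. Counting
the edges between even vertices of colour `c` and odd vertices of colour `d` in one period in two
ways gives `e c * M c d = o d * M d c`. For the colours `a`, `b` of an edge `x, x + 1` both
entries of `M` are positive, and the two instances of this identity give
`e a * e b = o a * o b`. Hence the ratio of the count of `φ x` on the parity class opposite to
`x` to its count on the class of `x` is the same for every vertex `x`; a colour seen on both
classes forces this ratio to be `1`.
-/

open Finset Function

lemma mem_nbrs {n : ℕ} {i v : ℤ} :
    v ∈ nbrs n i ↔ |v - i| ≤ 2 * n - 1 ∧ Odd (v - i) := by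
  simp only [nbrs, mem_filter, mem_Icc, abs_le]
  constructor <;> rintro ⟨h, hodd⟩ <;> exact ⟨by omega, hodd⟩

lemma nbrs_eq_map (n : ℕ) (i : ℤ) : nbrs n i = (nbrs n 0).map (addLeftEmbedding i) := by
  ext v
  simp only [mem_map, addLeftEmbedding_apply, mem_nbrs, sub_zero]
  exact ⟨fun h => ⟨v - i, h, by ring⟩, by rintro ⟨s, hs, rfl⟩; simpa using hs⟩

lemma neg_mem_nbrs_zero {n : ℕ} {s : ℤ} : -s ∈ nbrs n 0 ↔ s ∈ nbrs n 0 := by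
  simp [mem_nbrs]

lemma odd_iff_even_of_mem_nbrs {n : ℕ} {i v : ℤ} (h : v ∈ nbrs n i) : Odd v ↔ Even i := by
  rw [← sub_add_cancel v i, Int.odd_add]
  exact iff_true_left (mem_nbrs.mp h).2

lemma even_iff_odd_of_mem_nbrs {n : ℕ} {i v : ℤ} (h : v ∈ nbrs n i) : Even v ↔ Odd i := by
  rw [← Int.not_odd_iff_even, odd_iff_even_of_mem_nbrs h, Int.not_even_iff_odd]

lemma succ_mem_nbrs {n : ℕ} (hn : 0 < n) (i : ℤ) : i + 1 ∈ nbrs n i := by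
  simp [mem_nbrs]; omega

lemma mem_nbrs_comm {n : ℕ} {i v : ℤ} : v ∈ nbrs n i ↔ i ∈ nbrs n v := by
  rw [mem_nbrs, mem_nbrs, abs_sub_comm, ← neg_sub, odd_neg]

theorem Function.Periodic.sum_range_add {R : Type*} [AddCommMonoid R] {g : ℤ → R} {t : ℕ}
    (hg : Periodic g t) (s : ℤ) : ∑ i ∈ range t, g (i + s) = ∑ i ∈ range t, g i := by
  have step : ∀ s : ℤ, ∑ i ∈ range t, g (i + (s + 1)) = ∑ i ∈ range t, g (i + s) := by
    intro s
    rcases t with _ | m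
    · simp
    · have hwrap : g ((m + 1 : ℕ) + s) = g (0 + s) := by
        rw [add_comm, hg, zero_add]
      calc ∑ i ∈ range (m + 1), g (i + (s + 1))
          = ∑ i ∈ range m, g ((i + 1 : ℕ) + s) + g ((m + 1 : ℕ) + s) := by
            rw [sum_range_succ]; push_cast; simp only [add_assoc, add_comm s 1]
        _ = ∑ i ∈ range (m + 1), g (i + s) := by
            rw [hwrap, sum_range_succ' (fun i : ℕ => g (i + s)), Nat.cast_zero]
  induction s using Int.induction_on with
  | zero => simp
  | succ s ih => rw [step, ih]
  | pred s ih => rw [← ih, ← step, sub_add_cancel]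

theorem sum_mul_sum_nbrs_comm {R : Type*} [CommSemiring R] {f g : ℤ → R} {t : ℕ}
    (hf : Periodic f t) (hg : Periodic g t) (n : ℕ) :
    ∑ i ∈ range t, f i * ∑ v ∈ nbrs n i, g v =
      ∑ i ∈ range t, g i * ∑ v ∈ nbrs n i, f v := by
  have expand : ∀ u w : ℤ → R, ∑ i ∈ range t, u i * ∑ v ∈ nbrs n i, w v =
      ∑ s ∈ nbrs n 0, ∑ i ∈ range t, u i * w (i + s) := fun u w => by
    have shift : ∀ i, ∑ v ∈ nbrs n i, w v = ∑ s ∈ nbrs n 0, w (i + s) := fun i => by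
      rw [nbrs_eq_map n i, sum_map]; rfl
    simp_rw [shift, mul_sum]
    exact sum_comm
  rw [expand, expand]
  calc ∑ s ∈ nbrs n 0, ∑ i ∈ range t, f i * g (i + s)
      = ∑ s ∈ nbrs n 0, ∑ i ∈ range t, g i * f (i + -s) := sum_congr rfl fun s _ => by
        have hper : Periodic (fun x => f x * g (x + s)) t := fun x => by
          show f (x + t) * g (x + t + s) = f x * g (x + s)
          rw [hf, add_right_comm, hg]
        rw [← hper.sum_range_add (-s)]
        simp [mul_comm]
    _ = ∑ s ∈ nbrs n 0, ∑ i ∈ range t, g i * f (i + s) :=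
        sum_nbij' Neg.neg Neg.neg (fun s hs => neg_mem_nbrs_zero.mpr hs)
          (fun s hs => neg_mem_nbrs_zero.mpr hs) (fun s _ => neg_neg s)
          (fun s _ => neg_neg s) (fun s _ => by simp)

lemma mul_eq_mul_of_forall_mul_succ_eq {p q : ℤ → ℕ} (hp : ∀ x, 0 < p x)
    (h : ∀ x, q x * p (x + 1) = q (x + 1) * p x) (x y : ℤ) : q x * p y = q y * p x := by
  have hp' : ∀ x, (p x : ℚ) ≠ 0 := fun x => by exact_mod_cast (hp x).ne'
  have hratio : Periodic (fun x => (q x : ℚ) / p x) 1 := fun x => by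
    rw [div_eq_div_iff (hp' _) (hp' _)]
    exact_mod_cast (h x).symm
  have := hratio.int_mul (y - x) x
  rw [Int.cast_id, mul_one, add_sub_cancel, div_eq_div_iff (hp' _) (hp' _)] at this
  exact_mod_cast this.symm

section Counts

variable {k : ℕ} (φ : ℤ → Fin k) (t : ℕ)

def evenCount (c : Fin k) : ℕ := ((range t).filter (fun i : ℕ => Even i ∧ φ i = c)).card

def oddCount (c : Fin k) : ℕ := ((range t).filter (fun i : ℕ => Odd i ∧ φ i = c)).card

def sameParityCount (x : ℤ) : ℕ :=
  if Even x then evenCount φ t (φ x) else oddCount φ t (φ x)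

def oppParityCount (x : ℤ) : ℕ :=
  if Even x then oddCount φ t (φ x) else evenCount φ t (φ x)

variable {φ t}

lemma oppParityCount_eq_sameParityCount_iff {x : ℤ} :
    oppParityCount φ t x = sameParityCount φ t x ↔
      evenCount φ t (φ x) = oddCount φ t (φ x) := by
  unfold oppParityCount sameParityCount
  split_ifs
  exacts [eq_comm, Iff.rfl]

lemma sameParityCount_pos (ht : 0 < t) (hte : Even t) (hper : Periodic φ t) (x : ℤ) :
    0 < sameParityCount φ t x := by
  obtain ⟨i, hi, m, rfl⟩ : ∃ i : ℕ, i < t ∧ ∃ m : ℤ, x = i + m * t :=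
    have hdiv := Int.emod_add_mul_ediv x t
    have hnonneg := Int.emod_nonneg x (b := t) (by omega)
    have hlt := Int.emod_lt_of_pos x (b := t) (by omega)
    ⟨(x % t).toNat, by omega, x / t, by rw [Int.toNat_of_nonneg hnonneg]; linarith⟩
  have hpar : Even ((i : ℤ) + m * t) ↔ Even i := by
    simp [Int.even_add, hte]
  have hcolor : φ (i + m * t) = φ i := by simpa using hper.int_mul m i
  unfold sameParityCount evenCount oddCount
  rw [hcolor]
  split_ifs with h <;> rw [hpar] at h <;>
    refine card_pos.mpr ⟨i, mem_filter.mpr ⟨mem_range.mpr hi, ?_, rfl⟩⟩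
  exacts [h, Nat.not_even_iff_odd.mp h]

namespace PerfectK

variable {n : ℕ} {M : Fin k → Fin k → ℕ}

lemma pos_of_mem_nbrs (hφ : PerfectK n k φ M) {i v : ℤ} (hv : v ∈ nbrs n i) :
    0 < M (φ i) (φ v) :=
  hφ i (φ v) ▸ card_pos.mpr ⟨v, mem_filter.mpr ⟨hv, rfl⟩⟩

lemma sum_ite_mul_sum_nbrs (hφ : PerfectK n k φ M) {P Q : ℤ → Prop} [DecidablePred P]
    [DecidablePred Q] (hPQ : ∀ i, P i → ∀ v ∈ nbrs n i, Q v) (c d : Fin k) :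
    ∑ i ∈ range t, (if P i ∧ φ i = c then 1 else 0) *
        ∑ v ∈ nbrs n i, (if Q v ∧ φ v = d then 1 else 0) =
      ((range t).filter (fun i : ℕ => P i ∧ φ i = c)).card * M c d := by
  simp_rw [ite_mul, one_mul, zero_mul]
  rw [← sum_filter, card_eq_sum_ones, sum_mul, one_mul]
  refine sum_congr rfl fun i hi => ?_
  obtain ⟨hP, rfl⟩ := (mem_filter.mp hi).2
  rw [sum_boole, Nat.cast_id, ← hφ i d]
  exact congrArg card (filter_congr fun v hv => and_iff_right (hPQ i hP v hv))

theorem evenCount_mul_eq_oddCount_mul (hφ : PerfectK n k φ M) (hte : Even t)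
    (hper : Periodic φ t) (c d : Fin k) :
    evenCount φ t c * M c d = oddCount φ t d * M d c := by
  have hf : Periodic (fun i : ℤ => if Even i ∧ φ i = c then 1 else 0) t := fun i => by
    simp [hper i, Int.even_add, hte]
  have hg : Periodic (fun i : ℤ => if Odd i ∧ φ i = d then 1 else 0) t := fun i => by
    simp [hper i, Int.odd_add, hte]
  have := sum_mul_sum_nbrs_comm (R := ℕ) hf hg n
  rw [hφ.sum_ite_mul_sum_nbrs fun i hi v hv => (odd_iff_even_of_mem_nbrs hv).mpr hi,
    hφ.sum_ite_mul_sum_nbrs fun i hi v hv => (even_iff_odd_of_mem_nbrs hv).mpr hi] at this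
  simpa [evenCount, oddCount] using this

theorem evenCount_mul_evenCount (hφ : PerfectK n k φ M) (hte : Even t) (hper : Periodic φ t)
    {a b : Fin k} (hab : 0 < M a b) (hba : 0 < M b a) :
    evenCount φ t a * evenCount φ t b = oddCount φ t a * oddCount φ t b := by
  have balance := hφ.evenCount_mul_eq_oddCount_mul hte hper
  apply Nat.eq_of_mul_eq_mul_right (Nat.mul_pos hab hba)
  calc evenCount φ t a * evenCount φ t b * (M a b * M b a)
      = evenCount φ t a * M a b * (evenCount φ t b * M b a) := by ring
    _ = oddCount φ t b * M b a * (oddCount φ t a * M a b) := by rw [balance, balance]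
    _ = oddCount φ t a * oddCount φ t b * (M a b * M b a) := by ring

theorem oppParityCount_mul_sameParityCount_succ (hφ : PerfectK n k φ M) (hn : 0 < n)
    (hte : Even t) (hper : Periodic φ t) (x : ℤ) :
    oppParityCount φ t x * sameParityCount φ t (x + 1) =
      oppParityCount φ t (x + 1) * sameParityCount φ t x := by
  have hadj := succ_mem_nbrs hn x
  have h := hφ.evenCount_mul_evenCount hte hper (hφ.pos_of_mem_nbrs hadj)
    (hφ.pos_of_mem_nbrs (mem_nbrs_comm.mp hadj))
  unfold oppParityCount sameParityCount
  simp only [Int.even_add_one]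
  split_ifs <;> linarith [mul_comm (evenCount φ t (φ x)) (evenCount φ t (φ (x + 1))),
    mul_comm (oddCount φ t (φ x)) (oddCount φ t (φ (x + 1)))]

end PerfectK

end Counts

theorem bipartite_or_balanced_general (n k t : ℕ) (hn : 0 < n)
    (ht : 0 < t) (hte : Even t)
    (φ : ℤ → Fin k) (M : Fin k → Fin k → ℕ) (hφ : PerfectK n k φ M)
    (hper : ∀ i : ℤ, φ (i + (t:ℤ)) = φ i) :
    (∀ i j : ℤ, Even i → Odd j → φ i ≠ φ j) ∨
    (∀ c : Fin k,
      ((Finset.range t).filter (fun i : ℕ => Even i ∧ φ (i : ℤ) = c)).card =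
      ((Finset.range t).filter (fun i : ℕ => Odd i ∧ φ (i : ℤ) = c)).card) := by
  refine or_iff_not_imp_left.mpr fun hmixed => ?_
  push Not at hmixed
  obtain ⟨i₀, j₀, hi₀, hj₀, hcolor⟩ := hmixed
  have hratio := mul_eq_mul_of_forall_mul_succ_eq (sameParityCount_pos ht hte hper)
    (hφ.oppParityCount_mul_sameParityCount_succ hn hte hper)
  have hbalanced₀ : oppParityCount φ t i₀ = sameParityCount φ t i₀ := by
    refine oppParityCount_eq_sameParityCount_iff.mpr (Nat.mul_self_inj.mp ?_)
    simpa only [oppParityCount, sameParityCount, if_pos hi₀,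
      if_neg (Int.not_even_iff_odd.mpr hj₀), ← hcolor] using (hratio i₀ j₀).symm
  intro c
  by_cases hc : ∃ x, φ x = c
  · obtain ⟨x, rfl⟩ := hc
    refine oppParityCount_eq_sameParityCount_iff.mp (Nat.eq_of_mul_eq_mul_right
      (sameParityCount_pos ht hte hper i₀) ?_)
    rw [hratio x i₀, hbalanced₀, mul_comm]
  · push Not at hc
    simp [hc]

/-- For a periodic perfect `k`-coloring of `Ci_∞(D_n)` with even period `t`:
either the colors on even and odd vertices are disjoint, or each color appears
equally often among even and odd residues of one period. -/
theorem bipartite_or_balanced (n k t : ℕ) (hn : 0 < n) (hk : 0 < k)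
    (ht : 0 < t) (hte : Even t)
    (φ : ℤ → Fin k) (M : Fin k → Fin k → ℕ) (hφ : PerfectK n k φ M)
    (hper : ∀ i : ℤ, φ (i + (t:ℤ)) = φ i) :
    (∀ i j : ℤ, Even i → Odd j → φ i ≠ φ j) ∨
    (∀ c : Fin k,
      ((Finset.range t).filter (fun i : ℕ => Even i ∧ φ (i : ℤ) = c)).card =
      ((Finset.range t).filter (fun i : ℕ => Odd i ∧ φ (i : ℤ) = c)).card) :=
  bipartite_or_balanced_general n k t hn ht hte φ M hφ hper
end
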